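/- For every n ≥ 0, the prefix of length 4^n of the Thue–Morse word t is a palindrome. -/

import Mathlib

/-- Prefix `u[0..n-1]` of the infinite word `u`. -/
def wordPrefix {A : Type*} (u : ℕ → A) (n : ℕ) : List A :=
  List.ofFn (fun i : Fin n => u i)

/-- Factor `u[i..i+ℓ-1]` of the infinite word `u`. -/
def wordFactor {A : Type*} (u : ℕ → A) (i ℓ : ℕ) : List A :=
  List.ofFn (fun j : Fin ℓ => u (i + j))

/-- A palindrome is a word equal to its reversal. -/
def IsPalindrome {A : Type*} (w : List A) : Prop := w.reverse = w

/-- `w` is a concatenation of `k` nonempty palindromes. -/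
def IsPalConcat {A : Type*} (w : List A) (k : ℕ) : Prop :=
  ∃ ps : List (List A), ps.length = k ∧ (∀ p ∈ ps, p ≠ [] ∧ IsPalindrome p) ∧ ps.flatten = w

/-- Prefix palindromic length: the least number of nonempty palindromes whose
concatenation is the prefix of length `n` of `u` (`PPL u 0 = 0`). -/
noncomputable def PPL {A : Type*} (u : ℕ → A) (n : ℕ) : ℕ :=
  sInf {k | IsPalConcat (wordPrefix u n) k}

/-- The PPL-difference sequence `d_u(n) = PPL_u(n+1) - PPL_u(n)`. -/
noncomputable def PPLdiff {A : Type*} (u : ℕ → A) (n : ℕ) : ℤ :=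
  (PPL u (n + 1) : ℤ) - (PPL u n : ℤ)

/-- The Thue–Morse word: `t n` is the number of `1`'s in the binary
representation of `n`, taken mod 2. -/
def thueMorse (n : ℕ) : ℕ := (Nat.digits 2 n).count 1 % 2

/-! Reversing a prefix of length `2 ^ m` sends position `i` to `2 ^ m - 1 - i`, whose `m` low
binary digits are those of `i` complemented. This changes the parity of the binary digit sum
by `m`, so for `m = 2 * n` the reversal fixes every letter of the prefix. -/

theorem isPalindrome_wordPrefix_iff {A : Type*} (u : ℕ → A) (n : ℕ) :
    IsPalindrome (wordPrefix u n) ↔ ∀ i < n, u (n - 1 - i) = u i := by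
  simp only [IsPalindrome, wordPrefix, List.ext_getElem_iff, List.length_reverse,
    List.length_ofFn, List.getElem_reverse, List.getElem_ofFn, true_and]
  exact ⟨fun h i hi => h i hi hi, fun h i hi _ => h i hi⟩

theorem count_one_digits_two_two_mul_add (j b : ℕ) (hb : b < 2) :
    (Nat.digits 2 (2 * j + b)).count 1 = (Nat.digits 2 j).count 1 + b := by
  rcases Nat.eq_zero_or_pos (2 * j + b) with h | h
  · obtain ⟨rfl, rfl⟩ : j = 0 ∧ b = 0 := by omega
    simp
  · rw [Nat.digits_def' (by norm_num) h, show (2 * j + b) % 2 = b by omega,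
      show (2 * j + b) / 2 = j by omega]
    interval_cases b <;> simp

theorem count_one_digits_two_add_count_one_digits_two_complement {m i : ℕ} (hi : i < 2 ^ m) :
    (Nat.digits 2 i).count 1 + (Nat.digits 2 (2 ^ m - 1 - i)).count 1 = m := by
  induction m generalizing i with
  | zero =>
    obtain rfl : i = 0 := by omega
    simp
  | succ m ih =>
    have hpow : 2 ^ (m + 1) = 2 * 2 ^ m := by ring
    have hcompl : 2 ^ (m + 1) - 1 - i = 2 * (2 ^ m - 1 - i / 2) + (1 - i % 2) := by omega
    have hlow := count_one_digits_two_two_mul_add (i / 2) (i % 2) (Nat.mod_lt _ two_pos)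
    have hhigh := count_one_digits_two_two_mul_add (2 ^ m - 1 - i / 2) (1 - i % 2) (by omega)
    rw [Nat.div_add_mod] at hlow
    rw [hcompl, hlow, hhigh]
    have hhalf := ih (show i / 2 < 2 ^ m by omega)
    omega

theorem thueMorse_two_pow_sub_one_sub {m i : ℕ} (hi : i < 2 ^ m) :
    thueMorse (2 ^ m - 1 - i) = (thueMorse i + m) % 2 := by
  have := count_one_digits_two_add_count_one_digits_two_complement hi
  unfold thueMorse
  omega

theorem thueMorse_pow_four_sub_one_sub {n i : ℕ} (hi : i < 4 ^ n) :
    thueMorse (4 ^ n - 1 - i) = thueMorse i := by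
  rw [show 4 ^ n = 2 ^ (2 * n) by rw [pow_mul]; norm_num] at hi ⊢
  rw [thueMorse_two_pow_sub_one_sub hi, Nat.add_mul_mod_self_left, thueMorse,
    Nat.mod_mod]

theorem thueMorse_prefix_pow_four_palindrome :
    ∀ n : ℕ, IsPalindrome (wordPrefix thueMorse (4 ^ n)) := fun _ =>
  (isPalindrome_wordPrefix_iff _ _).2 fun _ hi => thueMorse_pow_four_sub_one_sub hi
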